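/- Work under Assumption B2 with θ > 0, θ_n ≤ θ and δ_n := θ_n − θ ≤ 0, and with the endpoints of the truncated intervals I^n being 𝔽-stopping times such that Ī^n − v_n is also an 𝔽-stopping time, and the endpoints J̄^n of the truncated intervals J^n being 𝔽^{θ+v_n}-stopping times. For each I ∈ ℐ, define M^I := sup{ J̄^n − θ − δ_n : J ∈ 𝒥, J̄^n − θ − δ_n ≤ Ī^n } (the set over which the supremum is taken being non-empty, since at least one such point lies in [Ī^n − v_n, Ī^n]). Then M^I is an 𝔽-stopping time. -/

import Mathlib

open MeasureTheory

/-- The shifted filtration `𝔽ᵃ` with `ℱᵃ_t = ℱ_{t−a}`. -/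
def shiftF {Ω : Type*} {m : MeasurableSpace Ω} (F : Filtration ℝ m) (a : ℝ) :
    Filtration ℝ m where
  seq t := F (t - a)
  mono' := fun _ _ h => F.mono (sub_le_sub_right h a)
  le' := fun t => F.le (t - a)

/-- Lemma 2: let `θ > 0`, `θₙ ≤ θ`, `δₙ = θₙ − θ ≤ 0`; assume the endpoints
`Īⁿ` of the truncated intervals of `ℐ` are `𝔽`-stopping times such that `Īⁿ − vₙ` is also
an `𝔽`-stopping time, and the endpoints `J̄ⁿ` of the truncated intervals of `𝒥` are
`𝔽^{θ+vₙ}`-stopping times.  Then for each `I`, the random variable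
`M^I = sup{J̄ⁿ − θ − δₙ : J ∈ 𝒥, J̄ⁿ − θ − δₙ ≤ Īⁿ}` (the set over which the supremum is
taken being non-empty: it contains a point of `[Īⁿ − vₙ, Īⁿ]`) is an `𝔽`-stopping time. -/
theorem stmt_9 {Ω : Type*} {m : MeasurableSpace Ω} (F : Filtration ℝ m)
    (θ vn θn : ℝ) (hθ : 0 < θ) (hv : 0 < vn) (hθn : θn ≤ θ)
    (N : ℕ) (Jhi : Fin N → Ω → ℝ)
    (hJhi : ∀ j, IsStoppingTime (shiftF F (θ + vn)) (fun ω => (Jhi j ω : WithTop ℝ)))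
    (Ihi : Ω → ℝ) (hIhi : IsStoppingTime F (fun ω => (Ihi ω : WithTop ℝ)))
    (hIhiv : IsStoppingTime F fun ω => Ihi ω - vn)
    (hne : ∀ ω, ∃ j, Ihi ω - vn ≤ Jhi j ω - θ - (θn - θ) ∧ Jhi j ω - θ - (θn - θ) ≤ Ihi ω) :
    IsStoppingTime F
      (fun ω => ((sSup {x : ℝ | (∃ j, x = Jhi j ω - θ - (θn - θ)) ∧ x ≤ Ihi ω} : ℝ) : WithTop ℝ)) := by
  have hIhiv0 := hIhiv
  replace hIhiv : IsStoppingTime F (fun ω => ((Ihi ω - vn : ℝ) : WithTop ℝ)) := by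
    have e : (fun ω => ((Ihi ω - vn : ℝ) : WithTop ℝ)) = fun ω => (Ihi ω : WithTop ℝ) - (vn : WithTop ℝ) :=
      funext fun ω => rfl
    rw [e]; exact hIhiv0
  -- `Kⱼ := Jⱼ − θ − δₙ` is an `𝔽`-stopping time
  have hK : ∀ j, IsStoppingTime F (fun ω => ((Jhi j ω - θ - (θn - θ) : ℝ) : WithTop ℝ)) := by
    intro j t
    have h1 : {ω | ((Jhi j ω - θ - (θn - θ) : ℝ) : WithTop ℝ) ≤ (t : WithTop ℝ)} =
        {ω | (Jhi j ω : WithTop ℝ) ≤ ((t + θ + (θn - θ) : ℝ) : WithTop ℝ)} := by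
      ext ω; constructor <;> · intro h; simp only [Set.mem_setOf_eq, WithTop.coe_le_coe] at *; linarith
    show MeasurableSet[F t] {ω | ((Jhi j ω - θ - (θn - θ) : ℝ) : WithTop ℝ) ≤ (t : WithTop ℝ)}
    rw [h1]
    exact F.mono (show t + θ + (θn - θ) - (θ + vn) ≤ t by linarith) _
      (hJhi j (t + θ + (θn - θ)))
  -- `Kⱼ − vₙ` is an `𝔽`-stopping time
  have hK' : ∀ j, IsStoppingTime F (fun ω => ((Jhi j ω - θ - (θn - θ) - vn : ℝ) : WithTop ℝ)) := by
    intro j t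
    have h1 : {ω | ((Jhi j ω - θ - (θn - θ) - vn : ℝ) : WithTop ℝ) ≤ (t : WithTop ℝ)} =
        {ω | (Jhi j ω : WithTop ℝ) ≤ ((t + vn + θ + (θn - θ) : ℝ) : WithTop ℝ)} := by
      ext ω; constructor <;> · intro h; simp only [Set.mem_setOf_eq, WithTop.coe_le_coe] at *; linarith
    show MeasurableSet[F t] {ω | ((Jhi j ω - θ - (θn - θ) - vn : ℝ) : WithTop ℝ) ≤ (t : WithTop ℝ)}
    rw [h1]
    exact F.mono (show t + vn + θ + (θn - θ) - (θ + vn) ≤ t by linarith) _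
      (hJhi j (t + vn + θ + (θn - θ)))
  -- `{Ihi − vₙ < Kⱼ − vₙ}` belongs to the σ-algebra at the stopping time `Ihi − vₙ`
  have hlt : ∀ j, MeasurableSet[hIhiv.measurableSpace]
      {ω | Ihi ω - vn < Jhi j ω - θ - (θn - θ) - vn} := by
    intro j
    have := (IsStoppingTime.measurableSet_stopping_time_le (hK' j) hIhiv).compl
    convert this using 1
    ext ω; simp only [Set.mem_compl_iff, Set.mem_setOf_eq, not_le, WithTop.coe_lt_coe]
  intro t
  set S : Ω → Set ℝ := fun ω => {x : ℝ | (∃ j, x = Jhi j ω - θ - (θn - θ)) ∧ x ≤ Ihi ω} with hS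
  have hbdd : ∀ ω, BddAbove (S ω) := by
    intro ω
    refine Set.Finite.bddAbove (Set.Finite.subset
      (Set.finite_range (fun j => Jhi j ω - θ - (θn - θ))) ?_)
    rintro x ⟨⟨j, rfl⟩, -⟩; exact ⟨j, rfl⟩
  have hEq : {ω | sSup (S ω) ≤ t} =
      ⋂ j, (({ω | Jhi j ω - θ - (θn - θ) ≤ t} ∩ {ω | Ihi ω - vn ≤ t}) ∪
        ({ω | Ihi ω - vn < Jhi j ω - θ - (θn - θ) - vn} ∩ {ω | Ihi ω - vn ≤ t})) := by
    ext ω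
    obtain ⟨j0, hj0l, hj0r⟩ := hne ω
    have hj0mem : Jhi j0 ω - θ - (θn - θ) ∈ S ω := ⟨⟨j0, rfl⟩, hj0r⟩
    constructor
    · intro h
      have hB : Ihi ω - vn ≤ t :=
        le_trans hj0l (le_trans (le_csSup (hbdd ω) hj0mem) h)
      refine Set.mem_iInter.2 fun j => ?_
      by_cases hj : Jhi j ω - θ - (θn - θ) ≤ Ihi ω
      · exact Or.inl ⟨le_trans (le_csSup (hbdd ω) ⟨⟨j, rfl⟩, hj⟩) h, hB⟩
      · exact Or.inr ⟨by push_neg at hj; simpa using sub_lt_sub_right hj vn, hB⟩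
    · intro h
      refine csSup_le ⟨_, hj0mem⟩ ?_
      rintro x ⟨⟨j, rfl⟩, hx⟩
      rcases Set.mem_iInter.1 h j with ⟨h1, -⟩ | ⟨h1, -⟩
      · exact h1
      · exfalso
        have : Ihi ω < Jhi j ω - θ - (θn - θ) := by
          simp only [Set.mem_setOf_eq] at h1; linarith
        exact absurd hx (not_le.2 this)
  show MeasurableSet[F t] _
  rw [show {ω | (fun ω => ((sSup (S ω) : ℝ) : WithTop ℝ)) ω ≤ (t : WithTop ℝ)} = {ω | sSup (S ω) ≤ t} by
    ext ω; simp only [Set.mem_setOf_eq, WithTop.coe_le_coe], hEq]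
  have hKt : ∀ j, MeasurableSet[F t] {ω | Jhi j ω - θ - (θn - θ) ≤ t} := fun j => by
    simpa only [WithTop.coe_le_coe] using hK j t
  have hIt : MeasurableSet[F t] {ω | Ihi ω - vn ≤ t} := by
    simpa only [WithTop.coe_le_coe] using hIhiv t
  refine MeasurableSet.iInter fun j => MeasurableSet.union
    (MeasurableSet.inter (hKt j) hIt) ?_
  have hlt' := ((IsStoppingTime.measurableSet hIhiv _).1 (hlt j)).2 t
  simpa only [WithTop.coe_le_coe] using hlt'
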